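/- arXiv:math/0604295 — 7 statements merged into one kernel-verified Lean document; each statement's English description precedes it below -/
import Mathlib

section
/- Fix d ≥ 1 and p : Fin d × Fin d → ℝ with p_{ji} ≥ 0 and Σ_{j,i} p_{ji} = 1; set q_j := Σ_i p_{ji}, π_i := Σ_j p_{ji}, assume q_j > 0 and π_i > 0 for all i, j, and set ρ_{ji} := p_{ji}/π_i. Fix ν ∈ S^{d-1} and define f^i(μ) = (Σ_j (μ^j/ν^j) p_{ji}) / (Σ_j (μ^j/ν^j) q_j) on the positive orthant. Then for every v ∈ ℝ^d with Σ_j v^j = 0, the directional derivative of f at ν along v satisfies (Df(ν)·v)^i = π^i Σ_{j,k} (v^j/ν^j) π^k (ρ_{ji} − ρ_{jk}) for each i, and consequently Σ_i |(Df(ν)·v)^i| ≤ (Σ_k |v^k|/ν^k) · max_{j,k,ℓ} |ρ_{jk} − ρ_{jℓ}|. -/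
/-- Proposition 3.3 (core computation): explicit formula and exponential-type
bound for the derivative of the filter with respect to its initial condition
at the true initial distribution. -/
theorem filter_derivative_bound
    (d : ℕ) (hd : 1 ≤ d) (p : Fin d → Fin d → ℝ)
    (hp : ∀ j i, 0 ≤ p j i) (hpsum : ∑ j, ∑ i, p j i = 1)
    (q : Fin d → ℝ) (hq : ∀ j, q j = ∑ i, p j i) (hqpos : ∀ j, 0 < q j)
    (π : Fin d → ℝ) (hπ : ∀ i, π i = ∑ j, p j i) (hπpos : ∀ i, 0 < π i)
    (ρ : Fin d → Fin d → ℝ) (hρ : ∀ j i, ρ j i = p j i / π i)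
    (ν : Fin d → ℝ) (hν : ∀ i, 0 < ν i) (hνsum : ∑ i, ν i = 1)
    (f : (Fin d → ℝ) → Fin d → ℝ)
    (hf : ∀ μ i, f μ i =
      (∑ j, (μ j / ν j) * p j i) / (∑ j, (μ j / ν j) * q j))
    (v : Fin d → ℝ) (hv : ∑ j, v j = 0) :
    (∀ i : Fin d, fderiv ℝ f ν v i =
      π i * ∑ j, ∑ k, (v j / ν j) * π k * (ρ j i - ρ j k)) ∧
    ∑ i, |fderiv ℝ f ν v i| ≤
      (∑ k, |v k| / ν k) *
        ⨆ x : Fin d × Fin d × Fin d, |ρ x.1 x.2.1 - ρ x.1 x.2.2| := by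
  have hνne : ∀ j, (ν j) ≠ 0 := fun j => (hν j).ne'
  -- linear maps
  set T : Fin d → (Fin d → ℝ) →L[ℝ] ℝ :=
    fun i => ∑ j, (p j i / ν j) • (ContinuousLinearMap.proj j : (Fin d → ℝ) →L[ℝ] ℝ) with hT
  set TQ : (Fin d → ℝ) →L[ℝ] ℝ :=
    ∑ j, (q j / ν j) • (ContinuousLinearMap.proj j : (Fin d → ℝ) →L[ℝ] ℝ) with hTQ
  have hTapp : ∀ i μ, T i μ = ∑ j, (μ j / ν j) * p j i := by
    intro i μ
    simp only [hT, ContinuousLinearMap.sum_apply, ContinuousLinearMap.smul_apply,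
      ContinuousLinearMap.proj_apply, smul_eq_mul]
    exact Finset.sum_congr rfl fun j _ => by ring
  have hTQapp : ∀ μ, TQ μ = ∑ j, (μ j / ν j) * q j := by
    intro μ
    simp only [hTQ, ContinuousLinearMap.sum_apply, ContinuousLinearMap.smul_apply,
      ContinuousLinearMap.proj_apply, smul_eq_mul]
    exact Finset.sum_congr rfl fun j _ => by ring
  have hqsum : ∑ j, q j = 1 := by
    rw [← hpsum]; exact Finset.sum_congr rfl fun j _ => hq j
  have hπsum : ∑ k, π k = 1 := by
    rw [← hpsum, Finset.sum_comm]; exact Finset.sum_congr rfl fun k _ => hπ k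
  have hTQν : TQ ν = 1 := by
    rw [hTQapp]
    rw [Finset.sum_congr rfl fun j _ => by rw [div_self (hνne j), one_mul]]
    exact hqsum
  have hTν : ∀ i, T i ν = π i := by
    intro i
    rw [hTapp]
    rw [Finset.sum_congr rfl fun j _ => by rw [div_self (hνne j), one_mul]]
    exact (hπ i).symm
  -- derivative of each component
  have hder : ∀ i, HasFDerivAt (fun μ => f μ i) (T i - π i • TQ) ν := by
    intro i
    have h1 : HasFDerivAt (fun μ => T i μ) (T i) ν := (T i).hasFDerivAt
    have h2 : HasFDerivAt (fun μ => TQ μ) TQ ν := TQ.hasFDerivAt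
    have hne : TQ ν ≠ 0 := by rw [hTQν]; exact one_ne_zero
    have hinv : HasFDerivAt (fun μ => (TQ μ)⁻¹) ((-(TQ ν ^ 2)⁻¹) • TQ) ν :=
      (hasDerivAt_inv hne).comp_hasFDerivAt ν h2
    have hmul : HasFDerivAt (fun μ => T i μ * (TQ μ)⁻¹) _ ν := h1.mul hinv
    have hfun : (fun μ => f μ i) = fun μ => T i μ * (TQ μ)⁻¹ := by
      funext μ
      rw [hf, hTapp, hTQapp, div_eq_mul_inv]
    rw [hfun]
    refine hmul.congr_fderiv ?_
    ext w
    simp only [hTQν, hTν, ContinuousLinearMap.sub_apply, ContinuousLinearMap.add_apply,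
      ContinuousLinearMap.smul_apply, smul_eq_mul, one_pow, inv_one]
    ring
  have hfd : fderiv ℝ f ν = ContinuousLinearMap.pi (fun i => T i - π i • TQ) := by
    have : HasFDerivAt f (ContinuousLinearMap.pi (fun i => T i - π i • TQ)) ν := by
      apply hasFDerivAt_pi.2
      exact hder
    exact this.fderiv
  have happ : ∀ i, fderiv ℝ f ν v i = T i v - π i * TQ v := by
    intro i
    rw [hfd]
    simp [ContinuousLinearMap.pi_apply]
  -- algebraic identity
  have hform : ∀ i, fderiv ℝ f ν v i =
      π i * ∑ j, ∑ k, (v j / ν j) * π k * (ρ j i - ρ j k) := by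
    intro i
    rw [happ, hTapp, hTQapp]
    have hinner : ∀ j, ∑ k, (v j / ν j) * π k * (ρ j i - ρ j k)
        = (v j / ν j) * (ρ j i - q j) := by
      intro j
      have : ∀ k, (v j / ν j) * π k * (ρ j i - ρ j k)
          = (v j / ν j) * ρ j i * π k - (v j / ν j) * (π k * ρ j k) := fun k => by ring
      rw [Finset.sum_congr rfl fun k _ => this k, Finset.sum_sub_distrib,
        ← Finset.mul_sum, ← Finset.mul_sum, hπsum]
      have hpk : ∀ k, π k * ρ j k = p j k := by
        intro k; rw [hρ, mul_div_cancel₀ _ (hπpos k).ne']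
      rw [Finset.sum_congr rfl fun k _ => hpk k, ← hq j]
      ring
    rw [Finset.sum_congr rfl fun j _ => hinner j]
    rw [Finset.mul_sum, Finset.mul_sum, ← Finset.sum_sub_distrib]
    refine Finset.sum_congr rfl fun j _ => ?_
    rw [hρ]
    have hπne : π i ≠ 0 := (hπpos i).ne'
    have h1 : π i * (v j / ν j * (p j i / π i - q j))
        = (v j / ν j) * (π i * (p j i / π i)) - π i * (v j / ν j * q j) := by ring
    rw [h1, mul_div_cancel₀ _ hπne]
  refine ⟨hform, ?_⟩
  -- the bound
  set M := ⨆ x : Fin d × Fin d × Fin d, |ρ x.1 x.2.1 - ρ x.1 x.2.2| with hM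
  have hbdd : BddAbove (Set.range fun x : Fin d × Fin d × Fin d => |ρ x.1 x.2.1 - ρ x.1 x.2.2|) :=
    Set.Finite.bddAbove (Set.finite_range _)
  have hMle : ∀ j i k, |ρ j i - ρ j k| ≤ M := fun j i k =>
    le_ciSup hbdd (⟨j, i, k⟩ : Fin d × Fin d × Fin d)
  have hM0 : 0 ≤ M := by
    haveI : Nonempty (Fin d) := ⟨⟨0, hd⟩⟩
    exact le_trans (abs_nonneg _) (hMle (Classical.arbitrary _) (Classical.arbitrary _)
      (Classical.arbitrary _))
  set S := ∑ k, |v k| / ν k with hS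
  have hterm : ∀ i, |fderiv ℝ f ν v i| ≤ π i * (S * M) := by
    intro i
    rw [hform i, abs_mul, abs_of_pos (hπpos i)]
    apply mul_le_mul_of_nonneg_left _ (hπpos i).le
    calc |∑ j, ∑ k, (v j / ν j) * π k * (ρ j i - ρ j k)|
        ≤ ∑ j, ∑ k, |(v j / ν j) * π k * (ρ j i - ρ j k)| := by
          refine (Finset.abs_sum_le_sum_abs _ _).trans ?_
          exact Finset.sum_le_sum fun j _ => Finset.abs_sum_le_sum_abs _ _
      _ ≤ ∑ j, ∑ k, (|v j| / ν j) * π k * M := by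
          refine Finset.sum_le_sum fun j _ => Finset.sum_le_sum fun k _ => ?_
          rw [abs_mul, abs_mul, abs_div, abs_of_pos (hν j), abs_of_pos (hπpos k)]
          exact mul_le_mul_of_nonneg_left (hMle j i k)
            (mul_nonneg (div_nonneg (abs_nonneg _) (hν j).le) (hπpos k).le)
      _ = S * M := by
          rw [hS, Finset.sum_mul]
          refine Finset.sum_congr rfl fun j _ => ?_
          rw [← Finset.sum_mul, ← Finset.mul_sum, hπsum]
          ring
  calc ∑ i, |fderiv ℝ f ν v i| ≤ ∑ i, π i * (S * M) := Finset.sum_le_sum fun i _ => hterm i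
    _ = S * M := by rw [← Finset.sum_mul, hπsum, one_mul]
end

section
/- Fix d ≥ 1 and p : Fin d × Fin d → ℝ with p_{ji} ≥ 0 and Σ_{j,i} p_{ji} = 1; set q_j := Σ_i p_{ji} and assume q_j > 0 for all j. Fix ν ∈ S^{d-1} and define f^i(μ) = (Σ_j (μ^j/ν^j) p_{ji}) / (Σ_j (μ^j/ν^j) q_j) on the positive orthant. Then f is twice differentiable at every μ with all positive components, and the second directional derivative along v ∈ ℝ^d (i.e. the derivative of μ ↦ Df(μ)·v at μ in direction v) satisfies (D²f(μ)·v)^i = −2 (Df(μ)·v)^i · (Σ_j (v^j/ν^j) q_j) / (Σ_j (μ^j/ν^j) q_j) for each i. -/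
open ContinuousLinearMap Filter

/-- The continuous linear map `x ↦ ∑ j, (x j / ν j) * c j`. -/
noncomputable def Lmap {d : ℕ} (ν c : Fin d → ℝ) : (Fin d → ℝ) →L[ℝ] ℝ :=
  ∑ j, (c j / ν j) • ContinuousLinearMap.proj j

lemma Lmap_apply {d : ℕ} (ν c x : Fin d → ℝ) :
    Lmap ν c x = ∑ j, (x j / ν j) * c j := by
  simp only [Lmap, ContinuousLinearMap.sum_apply, ContinuousLinearMap.smul_apply,
    ContinuousLinearMap.proj_apply, smul_eq_mul]
  exact Finset.sum_congr rfl fun j _ => by ring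

/-- fderiv version of the quotient rule for real-valued functions on a normed space. -/
lemma hasFDerivAt_div' {E : Type*} [NormedAddCommGroup E] [NormedSpace ℝ E]
    {a b : E → ℝ} {a' b' : E →L[ℝ] ℝ} {x : E}
    (ha : HasFDerivAt a a' x) (hb : HasFDerivAt b b' x) (hx : b x ≠ 0) :
    HasFDerivAt (fun y => a y / b y)
      ((b x)⁻¹ • a' - (a x / b x ^ 2) • b') x := by
  have hinv : HasFDerivAt (fun y => (b y)⁻¹) ((-(b x ^ 2)⁻¹) • b') x := by
    have := (hasDerivAt_inv hx).comp_hasFDerivAt x hb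
    exact this
  have hmul : HasFDerivAt (fun y => a y * (b y)⁻¹) (a x • (-(b x ^ 2)⁻¹ • b') + (b x)⁻¹ • a') x :=
    ha.mul hinv
  have : (fun y => a y * (b y)⁻¹) = fun y => a y / b y := by
    funext y; rw [div_eq_mul_inv]
  rw [this] at hmul
  convert hmul using 1
  ext w
  simp only [ContinuousLinearMap.sub_apply, ContinuousLinearMap.smul_apply,
    ContinuousLinearMap.add_apply, smul_eq_mul]
  field_simp
  ring

/-- Second derivative of the filter with respect to its initial condition
(computation in the proof of Lemma 4.3). -/
theorem filter_second_derivative_formula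
    (d : ℕ) (hd : 1 ≤ d) (p : Fin d → Fin d → ℝ)
    (hp : ∀ j i, 0 ≤ p j i) (hpsum : ∑ j, ∑ i, p j i = 1)
    (q : Fin d → ℝ) (hq : ∀ j, q j = ∑ i, p j i) (hqpos : ∀ j, 0 < q j)
    (ν : Fin d → ℝ) (hν : ∀ i, 0 < ν i) (hνsum : ∑ i, ν i = 1)
    (f : (Fin d → ℝ) → Fin d → ℝ)
    (hf : ∀ μ i, f μ i =
      (∑ j, (μ j / ν j) * p j i) / (∑ j, (μ j / ν j) * q j))
    (μ : Fin d → ℝ) (hμ : ∀ i, 0 < μ i) :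
    DifferentiableAt ℝ f μ ∧
    (∀ v : Fin d → ℝ, DifferentiableAt ℝ (fun μ' => fderiv ℝ f μ' v) μ) ∧
    (∀ v : Fin d → ℝ, ∀ i : Fin d,
      fderiv ℝ (fun μ' => fderiv ℝ f μ' v) μ v i =
        -2 * fderiv ℝ f μ v i *
          ((∑ j, (v j / ν j) * q j) / (∑ j, (μ j / ν j) * q j))) := by
  haveI : Nonempty (Fin d) := Fin.pos_iff_nonempty.mp hd
  set D : (Fin d → ℝ) →L[ℝ] ℝ := Lmap ν q with hD
  set N : Fin d → (Fin d → ℝ) →L[ℝ] ℝ := fun i => Lmap ν (fun j => p j i) with hN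
  have hfe : f = fun μ' i => N i μ' / D μ' := by
    funext μ' i
    rw [hf, hD, hN]; rw [Lmap_apply, Lmap_apply]
  have hDμ : 0 < D μ := by
    rw [hD, Lmap_apply]
    exact Finset.sum_pos (fun j _ => by
      have := hμ j; have := hν j; have := hqpos j; positivity) Finset.univ_nonempty
  have hDne : D μ ≠ 0 := ne_of_gt hDμ
  -- derivative of f at any point where D ≠ 0
  have hfd : ∀ μ' : Fin d → ℝ, D μ' ≠ 0 →
      HasFDerivAt f (ContinuousLinearMap.pi fun i =>
        ((D μ')⁻¹ • N i - (N i μ' / D μ' ^ 2) • D)) μ' := by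
    intro μ' hne
    rw [hfe]
    exact hasFDerivAt_pi.mpr fun i =>
      hasFDerivAt_div' (N i).hasFDerivAt D.hasFDerivAt hne
  have hDf : ∀ μ' : Fin d → ℝ, D μ' ≠ 0 → ∀ v i,
      fderiv ℝ f μ' v i = (N i v * D μ' - N i μ' * D v) / D μ' ^ 2 := by
    intro μ' hne v i
    rw [(hfd μ' hne).fderiv]
    simp only [ContinuousLinearMap.pi_apply, ContinuousLinearMap.sub_apply,
      ContinuousLinearMap.smul_apply, smul_eq_mul]
    field_simp
  refine ⟨(hfd μ hDne).differentiableAt, ?_, ?_⟩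
  all_goals
  · intro v
    -- eventual equality with the explicit formula
    have hev0 : ∀ᶠ μ' in nhds μ, D μ' ≠ 0 := by
      have hopen : IsOpen (D ⁻¹' {(0:ℝ)}ᶜ) := isOpen_compl_singleton.preimage D.continuous
      exact eventually_of_mem (hopen.mem_nhds hDne) fun μ' h => h
    set G : (Fin d → ℝ) → Fin d → ℝ :=
      fun μ' i => (N i v * D μ' - N i μ' * D v) / D μ' ^ 2 with hG
    have hev : (fun μ' => fderiv ℝ f μ' v) =ᶠ[nhds μ] G := by
      filter_upwards [hev0] with μ' hne'
      funext i
      rw [hG]; exact hDf μ' hne' v i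
    -- G is differentiable at μ with explicit derivative
    have hGder : HasFDerivAt G (ContinuousLinearMap.pi fun i =>
        ((D μ * D μ)⁻¹ • ((N i v) • D - (D v) • N i) -
          ((N i v * D μ - N i μ * D v) / (D μ * D μ) ^ 2) •
            ((D μ) • D + (D μ) • D))) μ := by
      rw [hG]
      have hsq : ∀ μ' : Fin d → ℝ, D μ' ^ 2 = D μ' * D μ' := fun μ' => sq (D μ')
      simp only [hsq]
      refine hasFDerivAt_pi.mpr fun i => ?_
      refine hasFDerivAt_div' ?_ (D.hasFDerivAt.mul D.hasFDerivAt) (by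
        exact mul_ne_zero hDne hDne)
      have h1 : HasFDerivAt (fun μ' => N i v * D μ') ((N i v) • D) μ :=
        D.hasFDerivAt.const_mul (N i v)
      have h2 : HasFDerivAt (fun μ' => N i μ' * D v) ((D v) • (N i)) μ := by
        simpa [smul_smul] using (N i).hasFDerivAt.mul_const (D v)
      exact h1.sub h2
    first
    | exact hGder.differentiableAt.congr_of_eventuallyEq hev
    | · intro i
        rw [hev.fderiv_eq, hGder.fderiv]
        have hveq : (∑ j, (v j / ν j) * q j) = D v := (Lmap_apply ν q v).symm
        have hμeq : (∑ j, (μ j / ν j) * q j) = D μ := (Lmap_apply ν q μ).symm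
        rw [hveq, hμeq, hDf μ hDne v i]
        simp only [ContinuousLinearMap.pi_apply, ContinuousLinearMap.sub_apply,
          ContinuousLinearMap.smul_apply, ContinuousLinearMap.add_apply, smul_eq_mul]
        field_simp
        ring
end

section
/- Let d ≥ 1, t > 0, let y : [0,t] → ℝ be continuous, let f, f̃ : ℝ^d × ℝ → ℝ^d be continuous, and let x : [0,t] → ℝ^d be differentiable with x'(s) = f(x(s), y(s)) for all s ∈ [0,t]. Suppose Φ : [0,t] × ℝ^d → ℝ^d is continuously differentiable and satisfies Φ(t,z) = z for all z and the transport equation ∂_s Φ(s,z) + D_zΦ(s,z)(f̃(z, y(s))) = 0 for all (s,z) ∈ [0,t] × ℝ^d, where D_zΦ(s,z) denotes the derivative of Φ(s,·) at z. Then x(t) − Φ(0, x(0)) = ∫₀^t D_zΦ(s, x(s))(f(x(s), y(s)) − f̃(x(s), y(s))) ds. -/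
open intervalIntegral

/-- Deterministic error-decomposition identity (Introduction / Proposition 2.4):
the difference between the exact flow and the approximate flow is the integral
of the derivative of the approximate flow applied to the difference of vector
fields along the exact trajectory. -/
theorem flow_error_decomposition
    (d : ℕ) (hd : 1 ≤ d) (t : ℝ) (ht : 0 < t)
    (y : ℝ → ℝ) (hy : ContinuousOn y (Set.Icc 0 t))
    (f f' : (Fin d → ℝ) → ℝ → Fin d → ℝ)
    (hf : Continuous (fun p : (Fin d → ℝ) × ℝ => f p.1 p.2))
    (hf' : Continuous (fun p : (Fin d → ℝ) × ℝ => f' p.1 p.2))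
    (x : ℝ → Fin d → ℝ)
    (hx : ∀ s ∈ Set.Icc (0 : ℝ) t, HasDerivAt x (f (x s) (y s)) s)
    (Φ : ℝ → (Fin d → ℝ) → Fin d → ℝ)
    (Φₛ : ℝ → (Fin d → ℝ) → Fin d → ℝ)
    (DΦ : ℝ → (Fin d → ℝ) → (Fin d → ℝ) →L[ℝ] (Fin d → ℝ))
    (hΦcont : Continuous (fun p : ℝ × (Fin d → ℝ) => Φ p.1 p.2))
    (hΦₛcont : Continuous (fun p : ℝ × (Fin d → ℝ) => Φₛ p.1 p.2))
    (hDΦcont : Continuous (fun p : ℝ × (Fin d → ℝ) => DΦ p.1 p.2))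
    (hΦₛ : ∀ s ∈ Set.Icc (0 : ℝ) t, ∀ z, HasDerivAt (fun s' => Φ s' z) (Φₛ s z) s)
    (hDΦ : ∀ s ∈ Set.Icc (0 : ℝ) t, ∀ z, HasFDerivAt (Φ s) (DΦ s z) z)
    (hfinal : ∀ z, Φ t z = z)
    (htransport : ∀ s ∈ Set.Icc (0 : ℝ) t, ∀ z, Φₛ s z + DΦ s z (f' z (y s)) = 0) :
    x t - Φ 0 (x 0) =
      ∫ s in (0 : ℝ)..t, DΦ s (x s) (f (x s) (y s) - f' (x s) (y s)) := by
  have ht' : (0 : ℝ) ≤ t := ht.le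
  have huIcc : Set.uIcc (0 : ℝ) t = Set.Icc 0 t := Set.uIcc_of_le ht'
  set g : ℝ → Fin d → ℝ := fun s => Φ s (x s) with hgdef
  set G : ℝ → Fin d → ℝ :=
    fun s => Φₛ s (x s) + DΦ s (x s) (f (x s) (y s)) with hGdef
  have hcx : ContinuousOn x (Set.Icc 0 t) :=
    fun s hs => (hx s hs).continuousAt.continuousWithinAt
  have hpair : ContinuousOn (fun s => (s, x s)) (Set.Icc 0 t) :=
    continuousOn_id.prodMk hcx
  -- continuity of G on [0,t]
  have hGc : ContinuousOn G (Set.Icc 0 t) := by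
    have h1 : ContinuousOn (fun s => Φₛ s (x s)) (Set.Icc 0 t) :=
      hΦₛcont.comp_continuousOn hpair
    have h2 : ContinuousOn (fun s => DΦ s (x s)) (Set.Icc 0 t) :=
      hDΦcont.comp_continuousOn hpair
    have h3 : ContinuousOn (fun s => f (x s) (y s)) (Set.Icc 0 t) :=
      hf.comp_continuousOn (hcx.prodMk hy)
    exact h1.add (h2.clm_apply h3)
  -- derivative of g on the open interval
  have hderiv : ∀ s ∈ Set.Ioo (0 : ℝ) t, HasDerivAt g (G s) s := by
    intro s hs
    have hsIcc : s ∈ Set.Icc (0 : ℝ) t := Set.mem_Icc_of_Ioo hs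
    have hA : HasDerivAt (fun v => Φ s (x v)) (DΦ s (x s) (f (x s) (y s))) s :=
      (hDΦ s hsIcc (x s)).comp_hasDerivAt s (hx s hsIcc)
    have hB : HasDerivAt (fun v => Φ v (x v) - Φ s (x v)) (Φₛ s (x s)) s := by
      rw [hasDerivAt_iff_isLittleO, Asymptotics.isLittleO_iff]
      intro ε hε
      -- continuity of Φₛ at (s, x s)
      obtain ⟨δ, hδ, hball⟩ :=
        Metric.continuousAt_iff.mp hΦₛcont.continuousAt ε hε
      have hxc : ContinuousAt x s := (hx s hsIcc).continuousAt
      have hmem1 : Set.Ioo (0 : ℝ) t ∈ nhds s := isOpen_Ioo.mem_nhds hs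
      have hmem2 : {v : ℝ | dist v s < δ} ∈ nhds s := by
        have := Metric.ball_mem_nhds s hδ
        simpa [Metric.ball] using this
      have hmem3 : {v : ℝ | dist (x v) (x s) < δ} ∈ nhds s := by
        have := hxc (Metric.ball_mem_nhds (x s) hδ)
        simpa [Metric.ball] using this
      filter_upwards [hmem1, hmem2, hmem3] with v hv1 hv2 hv3
      have hvIcc : v ∈ Set.Icc (0 : ℝ) t := Set.mem_Icc_of_Ioo hv1
      have hsub : Set.uIcc s v ⊆ Set.Icc (0 : ℝ) t := by
        rw [← huIcc]
        exact Set.uIcc_subset_uIcc (huIcc ▸ hsIcc) (huIcc ▸ hvIcc)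
      have hint : ∀ z : Fin d → ℝ,
          IntervalIntegrable (fun u => Φₛ u z) MeasureTheory.volume s v := by
        intro z
        exact (hΦₛcont.comp (continuous_id.prodMk continuous_const)).continuousOn
          |>.intervalIntegrable
      have key : Φ v (x v) - Φ s (x v) = ∫ u in s..v, Φₛ u (x v) := by
        rw [intervalIntegral.integral_eq_sub_of_hasDerivAt
          (fun u hu => hΦₛ u (hsub hu) (x v)) (hint (x v))]
      have hconst : (∫ u in s..v, Φₛ s (x s)) = (v - s) • Φₛ s (x s) :=
        intervalIntegral.integral_const _
      have hrw : Φ v (x v) - Φ s (x v) - (Φ s (x s) - Φ s (x s)) - (v - s) • Φₛ s (x s)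
          = ∫ u in s..v, (Φₛ u (x v) - Φₛ s (x s)) := by
        rw [intervalIntegral.integral_sub (hint (x v)) intervalIntegrable_const,
          ← key, hconst]
        abel
      have hbound : ‖∫ u in s..v, (Φₛ u (x v) - Φₛ s (x s))‖ ≤ ε * |v - s| := by
        apply intervalIntegral.norm_integral_le_of_norm_le_const
        intro u hu
        have huIcc' : u ∈ Set.uIcc s v := Set.Ioc_subset_Icc_self hu
        have hus : |u - s| ≤ |v - s| := by
          rcases le_total s v with h | h
          · rw [Set.uIcc_of_le h] at huIcc'
            rw [abs_of_nonneg (by linarith [huIcc'.1]), abs_of_nonneg (by linarith)]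
            linarith [huIcc'.2]
          · rw [Set.uIcc_of_ge h] at huIcc'
            rw [abs_of_nonpos (by linarith [huIcc'.2]), abs_of_nonpos (by linarith)]
            linarith [huIcc'.1]
        have hdist : dist (u, x v) (s, x s) < δ := by
          rw [Prod.dist_eq]
          apply max_lt
          · calc dist u s = |u - s| := Real.dist_eq u s
              _ ≤ |v - s| := hus
              _ = dist v s := (Real.dist_eq v s).symm
              _ < δ := hv2
          · exact hv3
        have := hball hdist
        rw [dist_eq_norm] at this
        exact this.le
      calc ‖Φ v (x v) - Φ s (x v) - (Φ s (x s) - Φ s (x s)) - (v - s) • Φₛ s (x s)‖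
          = ‖∫ u in s..v, (Φₛ u (x v) - Φₛ s (x s))‖ := by rw [hrw]
        _ ≤ ε * |v - s| := hbound
        _ = ε * ‖v - s‖ := by rw [Real.norm_eq_abs]
    have hsum := hB.fun_add hA
    have : (fun v => Φ v (x v) - Φ s (x v) + Φ s (x v)) = g := by
      funext v; simp [hgdef]
    rw [this] at hsum
    exact hsum
  -- continuity of g
  have hgc : ContinuousOn g (Set.Icc 0 t) :=
    hΦcont.comp_continuousOn hpair
  -- FTC
  have hGint : IntervalIntegrable G MeasureTheory.volume 0 t := by
    apply ContinuousOn.intervalIntegrable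
    rwa [huIcc]
  have hftc : (∫ s in (0 : ℝ)..t, G s) = g t - g 0 :=
    intervalIntegral.integral_eq_sub_of_hasDeriv_right_of_le ht' hgc
      (fun s hs => (hderiv s hs).hasDerivWithinAt) hGint
  have hgt : g t = x t := by simp [hgdef, hfinal]
  have hcong : (∫ s in (0 : ℝ)..t, DΦ s (x s) (f (x s) (y s) - f' (x s) (y s)))
      = ∫ s in (0 : ℝ)..t, G s := by
    apply intervalIntegral.integral_congr
    intro s hs
    rw [huIcc] at hs
    have h := htransport s hs (x s)
    have h2 : Φₛ s (x s) = -DΦ s (x s) (f' (x s) (y s)) :=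
      eq_neg_of_add_eq_zero_left h
    simp only [hGdef, map_sub, h2]
    abel
  rw [hcong, hftc, hgt]
end

section
/- Let d ≥ 1, t > 0, λ > 0, C ≥ 0, K ≥ 0, let y : [0,t] → ℝ be continuous, let f, f̃ : ℝ^d × ℝ → ℝ^d be continuous, let x : [0,t] → ℝ^d be differentiable with x'(s) = f(x(s), y(s)), and let Φ : [0,t] × ℝ^d → ℝ^d be continuously differentiable with Φ(t,z) = z and ∂_s Φ(s,z) + D_zΦ(s,z)(f̃(z, y(s))) = 0 for all (s,z). If in addition ‖f(x(s), y(s)) − f̃(x(s), y(s))‖ ≤ K for all s ∈ [0,t] and the operator norm satisfies ‖D_zΦ(s, x(s))‖ ≤ C e^{−λ(t−s)} for all s ∈ [0,t], then ‖x(t) − Φ(0, x(0))‖ ≤ C K (1 − e^{−λ t})/λ ≤ C K/λ, a bound independent of t. -/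
open intervalIntegral

/-- Uniform-in-time robustness estimate from the Introduction: finite-time
robustness plus exponential forgetting of the initial condition gives an error
bound independent of the time horizon. -/
theorem flow_error_uniform_bound
    (d : ℕ) (hd : 1 ≤ d) (t : ℝ) (ht : 0 < t)
    (lam C K : ℝ) (hlam : 0 < lam) (hC : 0 ≤ C) (hK : 0 ≤ K)
    (y : ℝ → ℝ) (hy : ContinuousOn y (Set.Icc 0 t))
    (f f' : (Fin d → ℝ) → ℝ → Fin d → ℝ)
    (hf : Continuous (fun p : (Fin d → ℝ) × ℝ => f p.1 p.2))
    (hf' : Continuous (fun p : (Fin d → ℝ) × ℝ => f' p.1 p.2))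
    (x : ℝ → Fin d → ℝ)
    (hx : ∀ s ∈ Set.Icc (0 : ℝ) t, HasDerivAt x (f (x s) (y s)) s)
    (Φ : ℝ → (Fin d → ℝ) → Fin d → ℝ)
    (Φₛ : ℝ → (Fin d → ℝ) → Fin d → ℝ)
    (DΦ : ℝ → (Fin d → ℝ) → (Fin d → ℝ) →L[ℝ] (Fin d → ℝ))
    (hΦcont : Continuous (fun p : ℝ × (Fin d → ℝ) => Φ p.1 p.2))
    (hΦₛcont : Continuous (fun p : ℝ × (Fin d → ℝ) => Φₛ p.1 p.2))
    (hDΦcont : Continuous (fun p : ℝ × (Fin d → ℝ) => DΦ p.1 p.2))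
    (hΦₛ : ∀ s ∈ Set.Icc (0 : ℝ) t, ∀ z, HasDerivAt (fun s' => Φ s' z) (Φₛ s z) s)
    (hDΦ : ∀ s ∈ Set.Icc (0 : ℝ) t, ∀ z, HasFDerivAt (Φ s) (DΦ s z) z)
    (hfinal : ∀ z, Φ t z = z)
    (htransport : ∀ s ∈ Set.Icc (0 : ℝ) t, ∀ z, Φₛ s z + DΦ s z (f' z (y s)) = 0)
    (hKbound : ∀ s ∈ Set.Icc (0 : ℝ) t, ‖f (x s) (y s) - f' (x s) (y s)‖ ≤ K)
    (hCbound : ∀ s ∈ Set.Icc (0 : ℝ) t, ‖DΦ s (x s)‖ ≤ C * Real.exp (-lam * (t - s))) :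
    ‖x t - Φ 0 (x 0)‖ ≤ C * K * (1 - Real.exp (-lam * t)) / lam ∧
    C * K * (1 - Real.exp (-lam * t)) / lam ≤ C * K / lam := by
  set g : ℝ → Fin d → ℝ := fun s => Φ s (x s) with hg
  set g' : ℝ → Fin d → ℝ :=
    fun s => DΦ s (x s) (f (x s) (y s) - f' (x s) (y s)) with hg'
  -- continuity of x on [0,t]
  have hxc : ContinuousOn x (Set.Icc 0 t) := fun s hs =>
    (hx s hs).continuousAt.continuousWithinAt
  have hpair : ContinuousOn (fun s => (s, x s)) (Set.Icc 0 t) :=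
    continuousOn_id.prodMk hxc
  have hgc : ContinuousOn g (Set.Icc 0 t) := hΦcont.comp_continuousOn hpair
  have hwc : ContinuousOn (fun s => f (x s) (y s) - f' (x s) (y s)) (Set.Icc 0 t) :=
    (hf.comp_continuousOn (hxc.prodMk hy)).sub (hf'.comp_continuousOn (hxc.prodMk hy))
  have hg'c : ContinuousOn g' (Set.Icc 0 t) :=
    (hDΦcont.comp_continuousOn hpair).clm_apply hwc
  -- key derivative of g at interior points
  have hderiv : ∀ s₀ ∈ Set.Ioo (0 : ℝ) t, HasDerivAt g (g' s₀) s₀ := by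
    intro s₀ hs₀
    have hs₀' : s₀ ∈ Set.Icc (0 : ℝ) t := Set.mem_Icc_of_Ioo hs₀
    set z₀ := x s₀ with hz₀
    set A := DΦ s₀ z₀ with hA
    set a := Φₛ s₀ z₀ with ha
    set v := f (x s₀) (y s₀) with hv
    -- g' s₀ = a + A v
    have hval : g' s₀ = a + A v := by
      have h0 := htransport s₀ hs₀' z₀
      have : a = -A (f' z₀ (y s₀)) := by
        rw [eq_neg_iff_add_eq_zero]; exact h0
      show A (v - f' z₀ (y s₀)) = a + A v
      rw [map_sub, this]
      abel
    rw [hval, hasDerivAt_iff_isLittleO]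
    -- term III
    have hIII : (fun s => Φ s z₀ - Φ s₀ z₀ - (s - s₀) • a) =o[nhds s₀]
        fun s => s - s₀ := by
      have := hΦₛ s₀ hs₀' z₀
      rwa [hasDerivAt_iff_isLittleO] at this
    -- term II
    have hx₀ := hx s₀ hs₀'
    have hII : (fun s => A (x s - z₀) - (s - s₀) • A v) =o[nhds s₀]
        fun s => s - s₀ := by
      have h1 : (fun s => x s - z₀ - (s - s₀) • v) =o[nhds s₀] fun s => s - s₀ := by
        have := hx₀
        rwa [hasDerivAt_iff_isLittleO] at this
      have h2 : (fun s => A (x s - z₀ - (s - s₀) • v)) =o[nhds s₀]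
          fun s => s - s₀ :=
        (A.isBigO_comp _ _).trans_isLittleO h1
      refine h2.congr' (Filter.Eventually.of_forall fun s => ?_) (by rfl)
      simp only [map_sub, map_smul]
    -- term I
    have hI : (fun s => Φ s (x s) - Φ s z₀ - A (x s - z₀)) =o[nhds s₀]
        fun s => s - s₀ := by
      rw [Asymptotics.isLittleO_iff]
      intro c hc
      -- linear growth of x near s₀
      obtain ⟨M, hM, hMev⟩ := (hx₀.isBigO_sub).exists_pos
      rw [Asymptotics.isBigOWith_iff] at hMev
      -- continuity of DΦ at (s₀, z₀)
      obtain ⟨δ, hδ, hcont⟩ := Metric.continuousAt_iff.1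
        (hDΦcont.continuousAt (x := (s₀, z₀))) (c / M) (by positivity)
      set δ' : ℝ := min (δ / 2) (δ / (2 * M)) with hδ'
      have hδ'pos : 0 < δ' := by
        apply lt_min <;> positivity
      have hball : ∀ᶠ s in nhds s₀, dist s s₀ < δ' :=
        Metric.eventually_nhds_iff.2 ⟨δ', hδ'pos, fun _ h => h⟩
      have hIcc : ∀ᶠ s in nhds s₀, s ∈ Set.Icc (0 : ℝ) t :=
        Filter.eventually_of_mem (Icc_mem_nhds hs₀.1 hs₀.2) fun _ h => h
      filter_upwards [hball, hIcc, hMev] with s hsδ hsI hsM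
      -- x s is in the closed ball of radius δ/2
      have hxball : ‖x s - z₀‖ ≤ δ / 2 := by
        calc ‖x s - z₀‖ ≤ M * ‖s - s₀‖ := hsM
        _ ≤ M * (δ / (2 * M)) := by
            have : ‖s - s₀‖ ≤ δ / (2 * M) := by
              have := hsδ; rw [Real.dist_eq] at this
              exact le_of_lt (lt_of_lt_of_le this (min_le_right _ _))
            nlinarith
        _ = δ / 2 := by field_simp
      have hsδ2 : dist s s₀ < δ / 2 := lt_of_lt_of_le hsδ (min_le_left _ _)
      -- mean value estimate on the closed ball
      have hmvt : ‖(fun z => Φ s z - A z) (x s) - (fun z => Φ s z - A z) z₀‖ ≤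
          (c / M) * ‖x s - z₀‖ := by
        apply Convex.norm_image_sub_le_of_norm_hasFDerivWithin_le
          (f' := fun z => DΦ s z - A)
          (fun z _ => ((hDΦ s hsI z).sub A.hasFDerivAt).hasFDerivWithinAt)
          (fun z hz => ?_) (convex_closedBall z₀ (δ / 2))
          (Metric.mem_closedBall_self (by positivity))
          (Metric.mem_closedBall.2 (by rwa [dist_eq_norm]))
        · have hdz : dist (s, z) (s₀, z₀) < δ := by
            rw [Prod.dist_eq]
            apply max_lt (lt_of_lt_of_le hsδ2 (by linarith))
            exact lt_of_le_of_lt (Metric.mem_closedBall.1 hz) (by linarith)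
          have := hcont hdz
          rw [dist_eq_norm] at this
          exact this.le
      have heq : Φ s (x s) - Φ s z₀ - A (x s - z₀) =
          (fun z => Φ s z - A z) (x s) - (fun z => Φ s z - A z) z₀ := by
        simp only [map_sub]; abel
      rw [heq]
      calc ‖(fun z => Φ s z - A z) (x s) - (fun z => Φ s z - A z) z₀‖
          ≤ (c / M) * ‖x s - z₀‖ := hmvt
        _ ≤ (c / M) * (M * ‖s - s₀‖) := by
            apply mul_le_mul_of_nonneg_left hsM (by positivity)
        _ = c * ‖s - s₀‖ := by field_simp
    -- combine
    have hsum := (hI.add hII).add hIII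
    refine hsum.congr' (Filter.Eventually.of_forall fun s => ?_) (by rfl)
    simp only [hg, smul_add]
    abel
  -- FTC
  have hint : IntervalIntegrable g' MeasureTheory.volume 0 t := by
    apply ContinuousOn.intervalIntegrable
    rwa [Set.uIcc_of_le ht.le]
  have hFTC : ∫ s in (0:ℝ)..t, g' s = g t - g 0 :=
    integral_eq_sub_of_hasDeriv_right_of_le ht.le hgc
      (fun s hs => (hderiv s hs).hasDerivWithinAt) hint
  have hgt : g t = x t := hfinal (x t)
  have hkey : x t - Φ 0 (x 0) = ∫ s in (0:ℝ)..t, g' s := by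
    rw [hFTC, hgt]
  -- bound function and its integral
  set B : ℝ → ℝ := fun s => C * K * Real.exp (-lam * (t - s)) with hB
  have hBderiv : ∀ s ∈ Set.uIcc (0:ℝ) t,
      HasDerivAt (fun s => C * K / lam * Real.exp (-lam * (t - s))) (B s) s := by
    intro s _
    have h1 : HasDerivAt (fun s : ℝ => -lam * (t - s)) lam s := by
      simpa using ((hasDerivAt_id s).const_sub t).const_mul (-lam)
    have h2 := (h1.exp).const_mul (C * K / lam)
    refine h2.congr_deriv ?_
    rw [hB]
    field_simp
  have hBcont : Continuous B := by
    apply continuous_const.mul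
    exact (Continuous.mul continuous_const (continuous_const.sub continuous_id)).rexp
  have hBint : ∫ s in (0:ℝ)..t, B s = C * K * (1 - Real.exp (-lam * t)) / lam := by
    rw [integral_eq_sub_of_hasDerivAt hBderiv (hBcont.intervalIntegrable 0 t)]
    rw [sub_self, mul_zero, Real.exp_zero]
    field_simp
    ring
  -- the norm bound
  have hbound1 : ‖x t - Φ 0 (x 0)‖ ≤ C * K * (1 - Real.exp (-lam * t)) / lam := by
    rw [hkey, ← hBint]
    have habs : |∫ s in (0:ℝ)..t, B s| = ∫ s in (0:ℝ)..t, B s := by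
      rw [hBint]
      apply abs_of_nonneg
      have h2 : (0:ℝ) ≤ 1 - Real.exp (-lam * t) := by
        have := Real.exp_le_one_iff.2 (by nlinarith : -lam * t ≤ 0)
        linarith
      positivity
    rw [← habs]
    apply norm_integral_le_abs_of_norm_le _ (hBcont.intervalIntegrable 0 t)
    apply MeasureTheory.ae_restrict_of_forall_mem measurableSet_uIoc
    intro s hs
    have hsI : s ∈ Set.Icc (0:ℝ) t := by
      rw [Set.uIoc_of_le ht.le] at hs
      exact Set.mem_Icc_of_Ioc hs
    calc ‖g' s‖ ≤ ‖DΦ s (x s)‖ * ‖f (x s) (y s) - f' (x s) (y s)‖ :=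
          (DΦ s (x s)).le_opNorm _
      _ ≤ (C * Real.exp (-lam * (t - s))) * K := by
          apply mul_le_mul (hCbound s hsI) (hKbound s hsI) (norm_nonneg _)
          positivity
      _ = B s := by rw [hB]; ring
  refine ⟨hbound1, ?_⟩
  have h1 : C * K * (1 - Real.exp (-lam * t)) ≤ C * K := by
    nlinarith [Real.exp_pos (-lam * t), mul_nonneg hC hK]
  gcongr
end

section
/- Let d ≥ 1, let π ∈ Δ^{d-1} be a probability vector, and let h, h̃ ∈ ℝ^d. Then Σ_k |(h·π)(h^k − h·π) − (h̃·π)(h̃^k − h̃·π)| ≤ ((d+1) max_k |h^k| + d max_{k,ℓ} |h̃^k − h̃^ℓ|) |h − h̃|, where h·π = Σ_j h^j π^j and |h − h̃| = Σ_k |h^k − h̃^k| is the ℓ¹-norm. -/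
/-! With `a = h·π` and `a' = h̃·π`, each coordinate splits as
`a (h k - a) - a' (h̃ k - a') = a ((h k - h̃ k) - (a - a')) + (a - a') (h̃ k - a')`.
An average against `π` is bounded by the sup of what is averaged, giving `|a| ≤ max |h|` and
`|h̃ k - a'| ≤ max |h̃ k - h̃ l|`, while `π j ≤ 1` gives `|a - a'| ≤ |h - h̃|`; summing over `k`
yields the bound. -/

open Finset

section WeightedSum

variable {ι : Type*} [Fintype ι] {π : ι → ℝ}

theorem abs_sum_mul_le_of_abs_le (hπnn : ∀ i, 0 ≤ π i) (hπsum : ∑ i, π i = 1)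
    {f : ι → ℝ} {C : ℝ} (hf : ∀ j, |f j| ≤ C) : |∑ j, f j * π j| ≤ C :=
  calc |∑ j, f j * π j| ≤ ∑ j, |f j| * π j := by
        refine (abs_sum_le_sum_abs _ _).trans_eq (sum_congr rfl fun j _ => ?_)
        rw [abs_mul, abs_of_nonneg (hπnn j)]
    _ ≤ ∑ j, C * π j := by gcongr with j; exact hπnn j; exact hf j
    _ = C := by rw [← mul_sum, hπsum, mul_one]

theorem abs_sum_mul_le_sum_abs (hπnn : ∀ i, 0 ≤ π i) (hπsum : ∑ i, π i = 1) (f : ι → ℝ) :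
    |∑ j, f j * π j| ≤ ∑ j, |f j| := by
  have hπle (j : ι) : π j ≤ 1 := hπsum ▸ single_le_sum (fun i _ => hπnn i) (mem_univ j)
  refine (abs_sum_le_sum_abs _ _).trans (sum_le_sum fun j _ => ?_)
  rw [abs_mul, abs_of_nonneg (hπnn j)]
  exact mul_le_of_le_one_right (abs_nonneg _) (hπle j)

theorem sub_sum_mul_eq_sum_sub_mul (hπsum : ∑ i, π i = 1) (c : ℝ) (f : ι → ℝ) :
    c - ∑ j, f j * π j = ∑ j, (c - f j) * π j := by
  simp only [sub_mul, sum_sub_distrib, ← mul_sum, hπsum, mul_one]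

end WeightedSum

theorem abs_mul_sub_sub_mul_sub_le {a a' x x' M D S : ℝ} (ha : |a| ≤ M) (haa' : |a - a'| ≤ D)
    (hx' : |x' - a'| ≤ S) :
    |a * (x - a) - a' * (x' - a')| ≤ M * (|x - x'| + D) + D * S := by
  have hD : 0 ≤ D := (abs_nonneg _).trans haa'
  have hsplit : a * (x - a) - a' * (x' - a') = a * ((x - x') - (a - a')) + (a - a') * (x' - a') := by
    ring
  calc |a * (x - a) - a' * (x' - a')|
      ≤ |a| * |(x - x') - (a - a')| + |a - a'| * |x' - a'| := by
        rw [hsplit, ← abs_mul, ← abs_mul]; exact abs_add_le _ _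
    _ ≤ M * (|x - x'| + D) + D * S := by
        gcongr
        · exact (abs_nonneg _).trans ha
        · exact (abs_sub _ _).trans (by gcongr)

theorem quadratic_observation_term_bound_general
    (d : ℕ) (π h h' : Fin d → ℝ)
    (hπnn : ∀ i, 0 ≤ π i) (hπsum : ∑ i, π i = 1) :
    ∑ k, |(∑ j, h j * π j) * (h k - ∑ j, h j * π j) -
          (∑ j, h' j * π j) * (h' k - ∑ j, h' j * π j)| ≤
      ((d + 1) * (⨆ k : Fin d, |h k|) +
        d * ⨆ x : Fin d × Fin d, |h' x.1 - h' x.2|) *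
        ∑ k, |h k - h' k| := by
  set M := ⨆ k : Fin d, |h k|
  set S := ⨆ x : Fin d × Fin d, |h' x.1 - h' x.2|
  set D := ∑ k, |h k - h' k|
  have hM : |∑ j, h j * π j| ≤ M :=
    abs_sum_mul_le_of_abs_le hπnn hπsum fun j => le_ciSup (f := fun k => |h k|) (Finite.bddAbove_range _) j
  have hD : |∑ j, h j * π j - ∑ j, h' j * π j| ≤ D := by
    rw [← sum_sub_distrib]
    simpa only [sub_mul] using abs_sum_mul_le_sum_abs hπnn hπsum fun j => h j - h' j
  have hS (k : Fin d) : |h' k - ∑ j, h' j * π j| ≤ S := by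
    rw [sub_sum_mul_eq_sum_sub_mul hπsum]
    exact abs_sum_mul_le_of_abs_le hπnn hπsum fun j =>
      le_ciSup (f := fun x : Fin d × Fin d => |h' x.1 - h' x.2|) (Finite.bddAbove_range _) (k, j)
  calc _ ≤ ∑ k, (M * (|h k - h' k| + D) + D * S) :=
        sum_le_sum fun k _ => abs_mul_sub_sub_mul_sub_le hM hD (hS k)
    _ = ((d + 1) * M + d * S) * D := by
        simp only [sum_add_distrib, mul_add, ← mul_sum, sum_const, card_univ, Fintype.card_fin,
          nsmul_eq_mul]
        ring

/-- Inequality from the final step of the proof of Theorem 1.1: uniform bound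
over the simplex for the quadratic observation term of the Wonham filter. -/
theorem quadratic_observation_term_bound
    (d : ℕ) (hd : 1 ≤ d) (π h h' : Fin d → ℝ)
    (hπnn : ∀ i, 0 ≤ π i) (hπsum : ∑ i, π i = 1) :
    ∑ k, |(∑ j, h j * π j) * (h k - ∑ j, h j * π j) -
          (∑ j, h' j * π j) * (h' k - ∑ j, h' j * π j)| ≤
      ((d + 1) * (⨆ k : Fin d, |h k|) +
        d * ⨆ x : Fin d × Fin d, |h' x.1 - h' x.2|) *
        ∑ k, |h k - h' k| :=
  quadratic_observation_term_bound_general d π h h' hπnn hπsum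
end

section
/- Let d ≥ 1, let U be a d×d real matrix with all entries U_{jk} ≥ 0, let ρ ∈ ℝ^d with all entries ρ_k ≥ 0 and |Uρ| > 0 (ℓ¹-norm), and let c ∈ ℝ^d. Then Σ_i | Σ_{j,k} ((δ_{ij} − (Uρ)^i/|Uρ|)/|Uρ|) U_{jk} c_k ρ_k | ≤ d · max_k |c_k| / 1, i.e. the ℓ¹-norm of the vector with i-th component Σ_{j,k} (δ_{ij} − (Uρ)^i/|Uρ|) U_{jk} c_k ρ_k / |Uρ| is at most d max_k |c_k|. -/
/-!
Write `v = U ρ`, which is entrywise nonnegative, so `N = |v| = ∑ᵢ vᵢ` and `0 ≤ vᵢ / N ≤ 1`.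
Hence every Jacobian entry `δᵢⱼ - vᵢ / N` has absolute value at most `1`, and for each `i`
the `i`-th component is bounded by `∑ⱼ,ₖ Uⱼₖ |cₖ| ρₖ / N ≤ (max |c|) · ∑ⱼ vⱼ / N = max |c|`.
Summing over the `d` components gives the bound.
-/

open Matrix Finset

lemma abs_ite_one_zero_sub_le_one (p : Prop) [Decidable p] {t : ℝ} (h₀ : 0 ≤ t) (h₁ : t ≤ 1) :
    |(if p then (1 : ℝ) else 0) - t| ≤ 1 := by
  rw [abs_le]
  split_ifs <;> constructor <;> linarith

lemma abs_ite_one_zero_sub_div_sum_le_one {ι : Type*} [Fintype ι] {v : ι → ℝ}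
    (hv : ∀ i, 0 ≤ v i) (p : Prop) [Decidable p] (i : ι) :
    |(if p then (1 : ℝ) else 0) - v i / ∑ k, v k| ≤ 1 :=
  have hsum : 0 ≤ ∑ k, v k := sum_nonneg fun k _ => hv k
  abs_ite_one_zero_sub_le_one p (div_nonneg (hv i) hsum)
    (div_le_one_of_le₀ (single_le_sum (fun k _ => hv k) (mem_univ i)) hsum)

lemma mulVec_nonneg {ι κ : Type*} [Fintype κ] {U : Matrix ι κ ℝ} (hU : ∀ j k, 0 ≤ U j k)
    {ρ : κ → ℝ} (hρ : ∀ k, 0 ≤ ρ k) (j : ι) : 0 ≤ (U *ᵥ ρ) j :=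
  sum_nonneg fun k _ => mul_nonneg (hU j k) (hρ k)

section WeightedSum

variable {ι κ : Type*} [Fintype ι] [Fintype κ] {a : ι → ℝ} {U : Matrix ι κ ℝ} {ρ c : κ → ℝ}
  {M : ℝ}

lemma abs_sum_sum_mul_le_mul_sum_mulVec (ha : ∀ j, |a j| ≤ 1) (hU : ∀ j k, 0 ≤ U j k)
    (hρ : ∀ k, 0 ≤ ρ k) (hc : ∀ k, |c k| ≤ M) :
    |∑ j, ∑ k, a j * U j k * c k * ρ k| ≤ M * ∑ j, (U *ᵥ ρ) j := calc
  _ ≤ ∑ j, ∑ k, |a j * U j k * c k * ρ k| :=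
    (abs_sum_le_sum_abs _ _).trans (sum_le_sum fun j _ => abs_sum_le_sum_abs _ _)
  _ ≤ ∑ j, ∑ k, M * (U j k * ρ k) := by
    gcongr with j _ k _
    rw [abs_mul, abs_mul, abs_mul, abs_of_nonneg (hU j k), abs_of_nonneg (hρ k)]
    have := hU j k
    have := hρ k
    calc |a j| * U j k * |c k| * ρ k ≤ 1 * U j k * M * ρ k := by gcongr; exacts [ha j, hc k]
      _ = M * (U j k * ρ k) := by ring
  _ = M * ∑ j, (U *ᵥ ρ) j := by simp only [mulVec, dotProduct, mul_sum]

lemma abs_sum_sum_mul_div_sum_mulVec_le (ha : ∀ j, |a j| ≤ 1) (hU : ∀ j k, 0 ≤ U j k)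
    (hρ : ∀ k, 0 ≤ ρ k) (hc : ∀ k, |c k| ≤ M) (hM : 0 ≤ M) :
    |∑ j, ∑ k, a j * U j k * c k * ρ k / ∑ j, (U *ᵥ ρ) j| ≤ M := by
  have hN : 0 ≤ ∑ j, (U *ᵥ ρ) j := sum_nonneg fun j _ => mulVec_nonneg hU hρ j
  simp only [← sum_div]
  rw [abs_div, abs_of_nonneg hN]
  exact div_le_of_le_mul₀ hN hM (abs_sum_sum_mul_le_mul_sum_mulVec ha hU hρ hc)

end WeightedSum

theorem normalization_jacobian_integrand_bound_general
    (d : ℕ)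
    (U : Matrix (Fin d) (Fin d) ℝ) (hU : ∀ j k, 0 ≤ U j k)
    (ρ : Fin d → ℝ) (hρ : ∀ k, 0 ≤ ρ k)
    (N : ℝ) (hNdef : N = ∑ i, |(U *ᵥ ρ) i|)
    (c : Fin d → ℝ) :
    ∑ i, |∑ j, ∑ k,
        ((if i = j then (1 : ℝ) else 0) - (U *ᵥ ρ) i / N) * U j k * c k * ρ k / N| ≤
      d * ⨆ k : Fin d, |c k| := by
  have hv := mulVec_nonneg hU hρ
  have hN : N = ∑ i, (U *ᵥ ρ) i := by simp only [hNdef, abs_of_nonneg (hv _)]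
  have hc (k : Fin d) : |c k| ≤ ⨆ k, |c k| := le_ciSup (f := fun k => |c k|) (Set.finite_range _).bddAbove k
  have hM : 0 ≤ ⨆ k : Fin d, |c k| := Real.iSup_nonneg fun k => abs_nonneg _
  subst hN
  calc _ ≤ ∑ _i : Fin d, ⨆ k, |c k| := sum_le_sum fun i _ =>
        abs_sum_sum_mul_div_sum_mulVec_le
          (fun j => abs_ite_one_zero_sub_div_sum_le_one hv (i = j) i) hU hρ hc hM
    _ = d * ⨆ k, |c k| := by simp

/-- Key bound in the proof of Lemma B.3: the Skorokhod integrand built from the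
Jacobian of the normalization map and nonnegative Zakai propagators is bounded
by d times the sup-norm of c. -/
theorem normalization_jacobian_integrand_bound
    (d : ℕ) (hd : 1 ≤ d)
    (U : Matrix (Fin d) (Fin d) ℝ) (hU : ∀ j k, 0 ≤ U j k)
    (ρ : Fin d → ℝ) (hρ : ∀ k, 0 ≤ ρ k)
    (N : ℝ) (hNdef : N = ∑ i, |(U *ᵥ ρ) i|) (hN : 0 < N)
    (c : Fin d → ℝ) :
    ∑ i, |∑ j, ∑ k,
        ((if i = j then (1 : ℝ) else 0) - (U *ᵥ ρ) i / N) * U j k * c k * ρ k / N| ≤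
      d * ⨆ k : Fin d, |c k| :=
  normalization_jacobian_integrand_bound_general d U hU ρ hρ N hNdef c
end

section
/- Let d ≥ 1, ε ≥ 0, and let F : S^{d-1} → ℝ^d be a map that is continuously differentiable on a neighborhood of S^{d-1} within the affine hyperplane {x : Σ_i x^i = 1}, such that for every μ ∈ S^{d-1} and every v ∈ TS^{d-1} the directional derivative satisfies Σ_i |(DF(μ)·v)^i| ≤ ε Σ_k |v^k|/μ^k. Then for all μ₁, μ₂ ∈ S^{d-1}: Σ_i |F(μ₂)^i − F(μ₁)^i| ≤ ε · (max_k max(1/μ₁^k, 1/μ₂^k)) · |μ₂ − μ₁|, where |x| = Σ_i |x_i| is the ℓ¹-norm. -/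
/-- Proposition 3.5 abstracted: a derivative bound of the form
Σᵢ|(DF(μ)·v)ⁱ| ≤ ε Σₖ|vₖ|/μₖ on the open simplex integrates (along straight
segments) to a Lipschitz-type stability bound with constant
ε · max_k max(1/μ₁ᵏ, 1/μ₂ᵏ). -/
theorem simplex_derivative_bound_integrates
    (d : ℕ) (hd : 1 ≤ d) (ε : ℝ) (hε : 0 ≤ ε)
    (F : (Fin d → ℝ) → Fin d → ℝ)
    (DF : (Fin d → ℝ) → (Fin d → ℝ) →L[ℝ] (Fin d → ℝ))
    (hdiff : ∀ μ : Fin d → ℝ, (∀ i, 0 < μ i) → (∑ i, μ i = 1) →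
      HasFDerivWithinAt F (DF μ) {x : Fin d → ℝ | ∑ i, x i = 1} μ)
    (hcont : ContinuousOn DF {μ : Fin d → ℝ | (∀ i, 0 < μ i) ∧ ∑ i, μ i = 1})
    (hbound : ∀ μ : Fin d → ℝ, (∀ i, 0 < μ i) → (∑ i, μ i = 1) →
      ∀ v : Fin d → ℝ, (∑ i, v i = 0) →
        ∑ i, |DF μ v i| ≤ ε * ∑ k, |v k| / μ k)
    (μ₁ μ₂ : Fin d → ℝ)
    (hμ₁ : ∀ i, 0 < μ₁ i) (hμ₁sum : ∑ i, μ₁ i = 1)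
    (hμ₂ : ∀ i, 0 < μ₂ i) (hμ₂sum : ∑ i, μ₂ i = 1) :
    ∑ i, |F μ₂ i - F μ₁ i| ≤
      ε * (⨆ k : Fin d, max (1 / μ₁ k) (1 / μ₂ k)) * ∑ i, |μ₂ i - μ₁ i| := by
  haveI : Nonempty (Fin d) := ⟨⟨0, hd⟩⟩
  set M : ℝ := ⨆ k : Fin d, max (1 / μ₁ k) (1 / μ₂ k) with hM
  have hMle : ∀ k, max (1 / μ₁ k) (1 / μ₂ k) ≤ M := fun k => by
    rw [hM]; exact le_ciSup (f := fun k : Fin d => max (1/μ₁ k) (1/μ₂ k)) (Set.Finite.bddAbove (Set.finite_range _)) k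
  set H : Set (Fin d → ℝ) := {x : Fin d → ℝ | ∑ i, x i = 1} with hH
  set γ : ℝ → (Fin d → ℝ) := fun u => μ₁ + u • (μ₂ - μ₁) with hγ
  have hγsum : ∀ u : ℝ, γ u ∈ H := by
    intro u
    simp only [hγ, hH, Set.mem_setOf_eq, Pi.add_apply, Pi.smul_apply, Pi.sub_apply,
      smul_eq_mul]
    rw [Finset.sum_add_distrib, ← Finset.mul_sum, Finset.sum_sub_distrib, hμ₁sum, hμ₂sum]
    ring
  have hγmin : ∀ u ∈ Set.Icc (0:ℝ) 1, ∀ i, min (μ₁ i) (μ₂ i) ≤ γ u i := by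
    rintro u ⟨h0, h1⟩ i
    have h1' := min_le_left (μ₁ i) (μ₂ i)
    have h2' := min_le_right (μ₁ i) (μ₂ i)
    simp only [hγ, Pi.add_apply, Pi.smul_apply, Pi.sub_apply, smul_eq_mul]
    nlinarith
  have hγpos : ∀ u ∈ Set.Icc (0:ℝ) 1, ∀ i, 0 < γ u i := fun u hu i =>
    lt_of_lt_of_le (lt_min (hμ₁ i) (hμ₂ i)) (hγmin u hu i)
  have hMbd : ∀ u ∈ Set.Icc (0:ℝ) 1, ∀ i, 1 / γ u i ≤ M := by
    intro u hu i
    refine le_trans ?_ (hMle i)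
    have h1 : (1:ℝ) / γ u i ≤ 1 / min (μ₁ i) (μ₂ i) :=
      one_div_le_one_div_of_le (lt_min (hμ₁ i) (hμ₂ i)) (hγmin u hu i)
    rcases min_cases (μ₁ i) (μ₂ i) with ⟨he, _⟩ | ⟨he, _⟩
    · rw [he] at h1; exact le_trans h1 (le_max_left _ _)
    · rw [he] at h1; exact le_trans h1 (le_max_right _ _)
  have hM0 : 0 ≤ M := le_trans (le_max_left _ _) (hMle (Classical.arbitrary _)) |>.trans' 
    (le_of_lt (div_pos one_pos (hμ₁ _)))
  -- sum of v is zero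
  have hvsum : ∑ i, (μ₂ - μ₁) i = 0 := by
    simp only [Pi.sub_apply, Finset.sum_sub_distrib, hμ₁sum, hμ₂sum, sub_self]
  -- derivative norm bound
  have key : ∀ u ∈ Set.Icc (0:ℝ) 1,
      ∑ i, |DF (γ u) (μ₂ - μ₁) i| ≤ ε * M * ∑ i, |μ₂ i - μ₁ i| := by
    intro u hu
    refine le_trans (hbound (γ u) (hγpos u hu) (hγsum u) (μ₂ - μ₁) hvsum) ?_
    rw [mul_assoc]
    refine mul_le_mul_of_nonneg_left ?_ hε
    rw [Finset.mul_sum]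
    refine Finset.sum_le_sum fun k _ => ?_
    have : |(μ₂ - μ₁) k| / γ u k = |μ₂ k - μ₁ k| * (1 / γ u k) := by
      simp [Pi.sub_apply]; ring
    rw [this, mul_comm M]
    exact mul_le_mul_of_nonneg_left (hMbd u hu k) (abs_nonneg _)
  -- move to PiLp 1
  set E := PiLp 1 (fun _ : Fin d => ℝ) with hE
  set e : (Fin d → ℝ) ≃L[ℝ] E := (PiLp.continuousLinearEquiv 1 ℝ (fun _ : Fin d => ℝ)).symm
    with he
  set g : ℝ → E := fun u => e (F (γ u)) with hg
  have hnorm : ∀ x : Fin d → ℝ, ‖e x‖ = ∑ i, |x i| := by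
    intro x
    rw [PiLp.norm_eq_sum (by norm_num : 0 < (1:ENNReal).toReal)]
    simp only [ENNReal.toReal_one, Real.rpow_one, Real.norm_eq_abs, one_div, inv_one]
    rfl
  have hγderiv : ∀ u : ℝ, HasDerivAt γ (μ₂ - μ₁) u := by
    intro u
    have : HasDerivAt (fun u : ℝ => u • (μ₂ - μ₁)) ((1:ℝ) • (μ₂ - μ₁)) u :=
      (hasDerivAt_id u).smul_const (μ₂ - μ₁)
    rw [one_smul] at this
    exact this.const_add μ₁
  have hgderiv : ∀ u ∈ Set.Icc (0:ℝ) 1,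
      HasDerivWithinAt g (e (DF (γ u) (μ₂ - μ₁))) (Set.Icc 0 1) u := by
    intro u hu
    have h1 : HasDerivWithinAt (fun u => F (γ u)) (DF (γ u) (μ₂ - μ₁)) (Set.Icc 0 1) u := by
      have := (hdiff (γ u) (hγpos u hu) (hγsum u)).comp_hasDerivWithinAt
        (s := Set.Icc (0:ℝ) 1) u
        ((hγderiv u).hasDerivWithinAt) (fun x _ => hγsum x)
      exact this
    exact (e.toContinuousLinearMap.hasFDerivAt.comp_hasDerivWithinAt u h1)
  have mvt := Convex.norm_image_sub_le_of_norm_hasDerivWithin_le hgderiv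
    (fun u hu => by rw [hnorm]; exact key u hu)
    (convex_Icc 0 1) (Set.left_mem_Icc.mpr zero_le_one) (Set.right_mem_Icc.mpr zero_le_one)
  have hγ0 : γ 0 = μ₁ := by simp [hγ]
  have hγ1 : γ 1 = μ₂ := by simp [hγ]
  have : ‖g 1 - g 0‖ = ∑ i, |F μ₂ i - F μ₁ i| := by
    rw [hg]
    simp only [hγ0, hγ1]
    rw [← map_sub, hnorm]
    simp [Pi.sub_apply]
  rw [this] at mvt
  simpa using mvt
end
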